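/- For m, n ∈ ℕ and k, l ∈ ℕ ∪ {∞}, let I_{m,k} denote the graded F[t]-module t^m F[t]/(t^{m+k}) (so I_{m,∞} = t^m F[t]). Then I_{m,k} ⊗_{F[t]} I_{n,l} ≅ I_{m+n, min{k,l}} as graded F[t]-modules. -/

import Mathlib

/-!
Multiplication by `t^m` identifies `I_{m,k}` with the cyclic module `F[t]/(t^k)`, and for ideals
`I, J` of a commutative ring `R` one has `R/I ⊗_R R/J ≅ R/(I + J)`. As `(t^k) + (t^l) = (t^{min k l})`,
this gives `I_{m,k} ⊗ I_{n,l} ≅ I_{m+n, min k l}`, and the isomorphism sends `[p] ⊗ [q]` to `[p q]`.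
A product of polynomials concentrated in degrees `d₁` and `d₂` is concentrated in degree `d₁ + d₂`,
so the isomorphism is graded.
-/

open Polynomial
open scoped TensorProduct

/-- `t^e` for `e ∈ ℕ ∪ {∞}`, with the convention `t^∞ = 0`. -/
noncomputable def tpow (F : Type) [Field F] : ℕ∞ → F[X]
  | none => 0
  | some n => X ^ n

/-- The graded interval module `I_{m,k} = t^m F[t]/(t^{m+k})`, for `k ∈ ℕ ∪ {∞}`
(so `I_{m,∞} = t^m F[t]`). -/
noncomputable abbrev It (F : Type) [Field F] (m : ℕ) (k : ℕ∞) :=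
  (Submodule.span F[X] {(X : F[X]) ^ m}) ⧸
    (Submodule.comap (Submodule.span F[X] {(X : F[X]) ^ m}).subtype
      (Submodule.span F[X] {tpow F ((m : ℕ∞) + k)}))

/-- The homogeneous elements of degree `d` of the interval module `I_{m,k}`:
images of homogeneous polynomials of degree `d`. -/
noncomputable def ItHomog (F : Type) [Field F] (m : ℕ) (k : ℕ∞) (d : ℕ) : Set (It F m k) :=
  (Submodule.mkQ _) ''
    {p : Submodule.span F[X] {(X : F[X]) ^ m} | ∀ j ≠ d, (p : F[X]).coeff j = 0}

namespace Ideal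

variable {R : Type*} [CommRing R]

noncomputable def quotTensorQuotEquivQuotSup (I J : Ideal R) :
    (R ⧸ I) ⊗[R] (R ⧸ J) ≃ₗ[R] R ⧸ (J ⊔ I) :=
  TensorProduct.quotTensorEquivQuotSMul (R ⧸ J) I ≪≫ₗ
    Submodule.quotEquivOfEq _ _ (smul_top_eq_map I) ≪≫ₗ
    Submodule.Quotient.restrictScalarsEquiv R _ ≪≫ₗ
    (DoubleQuot.quotQuotEquivQuotSupₐ R J I).toLinearEquiv

theorem quotTensorQuotEquivQuotSup_mk_tmul_mk (I J : Ideal R) (a b : R) :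
    quotTensorQuotEquivQuotSup I J (Submodule.Quotient.mk a ⊗ₜ Submodule.Quotient.mk b) =
      Submodule.Quotient.mk (a * b) :=
  rfl

end Ideal

theorem Ideal.mul_mem_span_singleton_mul {R : Type*} [CommSemiring R] {a b x y : R}
    (hx : x ∈ span {a}) (hy : y ∈ span {b}) : x * y ∈ span {a * b} :=
  mem_span_singleton.2 (mul_dvd_mul (mem_span_singleton.1 hx) (mem_span_singleton.1 hy))

namespace Submodule

variable {R : Type*} [CommRing R] [IsDomain R]

theorem map_toSpanNonzeroSingleton_span_singleton {r : R} (hr : r ≠ 0) (s : R) :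
    (span R {s}).map (LinearEquiv.toSpanNonzeroSingleton R R r hr : R →ₗ[R] span R {r}) =
      (span R {r * s}).comap (span R {r}).subtype := by
  ext ⟨x, hx⟩
  obtain ⟨a, rfl⟩ := mem_span_singleton.1 hx
  have hsymm : (LinearEquiv.toSpanNonzeroSingleton R R r hr).symm ⟨a • r, hx⟩ = a :=
    (LinearEquiv.symm_apply_eq _).2 rfl
  rw [map_equiv_eq_comap_symm, mem_comap, mem_comap, LinearEquiv.coe_coe, hsymm, subtype_apply]
  change a ∈ Ideal.span {s} ↔ a * r ∈ Ideal.span {r * s}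
  rw [Ideal.mem_span_singleton, Ideal.mem_span_singleton, mul_comm a, mul_dvd_mul_iff_left hr]

/-- Multiplication by `r` identifies `R ⧸ (s)` with `(r) ⧸ (r s)`. -/
noncomputable def quotSpanSingletonEquivSpanSingletonQuot {r : R} (hr : r ≠ 0) (s : R) :
    (R ⧸ span R {s}) ≃ₗ[R] span R {r} ⧸ (span R {r * s}).comap (span R {r}).subtype :=
  Quotient.equiv _ _ (LinearEquiv.toSpanNonzeroSingleton R R r hr)
    (map_toSpanNonzeroSingleton_span_singleton hr s)

end Submodule

theorem Polynomial.coeff_mul_eq_zero_of_ne_add {R : Type*} [Semiring R] {p q : R[X]}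
    {d₁ d₂ : ℕ} (hp : ∀ j ≠ d₁, p.coeff j = 0) (hq : ∀ j ≠ d₂, q.coeff j = 0) :
    ∀ j ≠ d₁ + d₂, (p * q).coeff j = 0 := by
  intro j hj
  rw [coeff_mul]
  refine Finset.sum_eq_zero fun x hx => ?_
  have hsum : x.1 + x.2 = j := Finset.HasAntidiagonal.mem_antidiagonal.1 hx
  by_cases h₁ : x.1 = d₁
  · rw [hq x.2 (by omega), mul_zero]
  · rw [hp x.1 h₁, zero_mul]

section IntervalModule

variable (F : Type) [Field F]

theorem tpow_coe_add (m : ℕ) (k : ℕ∞) : tpow F (m + k) = X ^ m * tpow F k := by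
  cases k with
  | top => rw [add_top]; exact (mul_zero _).symm
  | coe k => rw [← ENat.natCast_add]; exact pow_add X m k

theorem tpow_dvd_tpow {k l : ℕ∞} (h : k ≤ l) : tpow F k ∣ tpow F l := by
  cases l with
  | top => exact dvd_zero _
  | coe l =>
    lift k to ℕ using ne_top_of_le_ne_top (ENat.natCast_ne_top l) h
    exact pow_dvd_pow X (ENat.natCast_le_natCast.1 h)

theorem span_tpow_sup_span_tpow (k l : ℕ∞) :
    Ideal.span {tpow F l} ⊔ Ideal.span {tpow F k} = Ideal.span {tpow F (min k l)} := by
  rcases le_total k l with h | h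
  · rw [min_eq_left h, sup_eq_right, Ideal.span_singleton_le_span_singleton]
    exact tpow_dvd_tpow F h
  · rw [min_eq_right h, sup_eq_left, Ideal.span_singleton_le_span_singleton]
    exact tpow_dvd_tpow F h

noncomputable def intervalEquiv (m : ℕ) (k : ℕ∞) :
    (F[X] ⧸ Ideal.span {tpow F k}) ≃ₗ[F[X]] It F m k :=
  Submodule.quotSpanSingletonEquivSpanSingletonQuot (pow_ne_zero m X_ne_zero) (tpow F k) ≪≫ₗ
    Submodule.quotEquivOfEq _ _ (by rw [tpow_coe_add])

theorem intervalEquiv_mk {m : ℕ} {k : ℕ∞} (a : F[X]) :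
    intervalEquiv F m k (Submodule.Quotient.mk a) =
      Submodule.Quotient.mk ⟨a * X ^ m, Ideal.mul_mem_left _ a (Ideal.mem_span_singleton_self _)⟩ :=
  rfl

theorem intervalEquiv_symm_mk {m : ℕ} {k : ℕ∞} (a : F[X]) (ha : a * X ^ m ∈ Ideal.span {X ^ m}) :
    (intervalEquiv F m k).symm (Submodule.Quotient.mk ⟨a * X ^ m, ha⟩) = Submodule.Quotient.mk a :=
  (LinearEquiv.symm_apply_eq _).2 (intervalEquiv_mk F a).symm

noncomputable def intervalTensorEquiv (m n : ℕ) (k l : ℕ∞) :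
    (It F m k ⊗[F[X]] It F n l) ≃ₗ[F[X]] It F (m + n) (min k l) :=
  TensorProduct.congr (intervalEquiv F m k).symm (intervalEquiv F n l).symm ≪≫ₗ
    Ideal.quotTensorQuotEquivQuotSup _ _ ≪≫ₗ
    Submodule.quotEquivOfEq _ _ (span_tpow_sup_span_tpow F k l) ≪≫ₗ
    intervalEquiv F (m + n) (min k l)

theorem intervalTensorEquiv_mk_tmul_mk {m n : ℕ} {k l : ℕ∞} (P : Ideal.span {(X : F[X]) ^ m})
    (Q : Ideal.span {(X : F[X]) ^ n}) :
    intervalTensorEquiv F m n k l (Submodule.Quotient.mk P ⊗ₜ Submodule.Quotient.mk Q) =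
      Submodule.Quotient.mk ⟨P * Q, pow_add (X : F[X]) m n ▸
        Ideal.mul_mem_span_singleton_mul P.2 Q.2⟩ := by
  obtain ⟨_, hP⟩ := P
  obtain ⟨_, hQ⟩ := Q
  obtain ⟨a, rfl⟩ := Ideal.mem_span_singleton'.1 hP
  obtain ⟨b, rfl⟩ := Ideal.mem_span_singleton'.1 hQ
  rw [intervalTensorEquiv, LinearEquiv.trans_apply, LinearEquiv.trans_apply,
    LinearEquiv.trans_apply, TensorProduct.congr_tmul, intervalEquiv_symm_mk, intervalEquiv_symm_mk,
    Ideal.quotTensorQuotEquivQuotSup_mk_tmul_mk, Submodule.quotEquivOfEq_mk, intervalEquiv_mk]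
  congr 2
  ring

end IntervalModule

/-- **Tensor product of interval modules.**  For `m, n ∈ ℕ` and `k, l ∈ ℕ ∪ {∞}`,
`I_{m,k} ⊗_{F[t]} I_{n,l} ≅ I_{m+n, min{k,l}}` as graded `F[t]`-modules: there is an
`F[t]`-linear isomorphism sending tensors of homogeneous elements of degrees `d₁`, `d₂`
to homogeneous elements of degree `d₁ + d₂`. -/
theorem interval_tensor (F : Type) [Field F] (m n : ℕ) (k l : ℕ∞) :
    ∃ e : (It F m k ⊗[F[X]] It F n l) ≃ₗ[F[X]] It F (m + n) (min k l),
      ∀ (d₁ d₂ : ℕ) (x : It F m k) (y : It F n l),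
        x ∈ ItHomog F m k d₁ → y ∈ ItHomog F n l d₂ →
          e (x ⊗ₜ[F[X]] y) ∈ ItHomog F (m + n) (min k l) (d₁ + d₂) := by
  refine ⟨intervalTensorEquiv F m n k l, ?_⟩
  rintro d₁ d₂ _ _ ⟨P, hP, rfl⟩ ⟨Q, hQ, rfl⟩
  rw [Submodule.mkQ_apply, Submodule.mkQ_apply, intervalTensorEquiv_mk_tmul_mk]
  refine ⟨_, ?_, rfl⟩
  exact Polynomial.coeff_mul_eq_zero_of_ne_add hP hQ
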